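/- arXiv:2007.13539 — 2 statements merged into one kernel-verified Lean document; each statement's English description precedes it below -/
import Mathlib

section
/- Let N ≥ 0 be a natural number and let g : ℝ → ℂ be analytic on an open neighborhood of the interval [0, 2π], with iteratedDeriv n g 0 = 0 and iteratedDeriv n g (2π) = 0 for all n = 0, 1, …, N. Then there exists a constant C ≥ 0 such that for every natural number M ≥ 1, |∫₀^{2π} g(t) dt − (2π/M)·Σ_{m=1}^{M} g(t_m)| ≤ C·M^{−(N+2)}, where t_m := 2π(m−1)/M. (Lemma 5.1, estimate (5.3): trapezoidal-rule error bound for analytic functions vanishing to order N at the endpoints.) -/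
open intervalIntegral Real

private lemma fourierCoeffOn_congr' {a b b' : ℝ} (h : b = b') (hab : a < b) (hab' : a < b')
    (f : ℝ → ℂ) (n : ℤ) : fourierCoeffOn hab f n = fourierCoeffOn hab' f n := by
  subst h; rfl

private lemma sum_fourier_nodes {M : ℕ} (hM : 1 ≤ M) (k : ℤ) :
    ∑ m ∈ Finset.range M, (fourier k (((2 * π * m / M : ℝ)) : AddCircle (2 * π)))
      = if (M : ℤ) ∣ k then (M : ℂ) else 0 := by
  have hM0 : (M : ℂ) ≠ 0 := Nat.cast_ne_zero.mpr (by omega)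
  have hπC : (π : ℂ) ≠ 0 := Complex.ofReal_ne_zero.mpr Real.pi_ne_zero
  have h2 : (2 * (π:ℂ) * Complex.I : ℂ) ≠ 0 := by
    simp [Complex.I_ne_zero, hπC]
  have hterm : ∀ m : ℕ, (fourier k (((2 * π * m / M : ℝ)) : AddCircle (2 * π)))
      = Complex.exp (2 * π * Complex.I * k / M) ^ m := by
    intro m
    rw [fourier_coe_apply, ← Complex.exp_nat_mul]
    congr 1
    have : ((2 * π * m / M : ℝ) : ℂ) = 2 * π * m / M := by push_cast; ring
    rw [this]
    field_simp
    push_cast; ring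
  simp_rw [hterm]
  set ζ : ℂ := Complex.exp (2 * π * Complex.I * k / M) with hζ
  by_cases hdvd : (M : ℤ) ∣ k
  · obtain ⟨j, hj⟩ := hdvd
    have hζ1 : ζ = 1 := by
      rw [hζ, hj]
      push_cast
      rw [show 2 * ↑π * Complex.I * (↑M * ↑j) / ↑M = ↑j * (2 * ↑π * Complex.I) by
        field_simp]
      exact Complex.exp_int_mul_two_pi_mul_I j
    rw [if_pos ⟨j, hj⟩]
    simp [hζ1]
  · have hζ1 : ζ ≠ 1 := by
      rw [hζ]
      intro hc
      rw [Complex.exp_eq_one_iff] at hc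
      obtain ⟨n, hn⟩ := hc
      apply hdvd
      refine ⟨n, ?_⟩
      have hkc : (k : ℂ) = M * n := by
        have h3 : 2 * (π:ℂ) * Complex.I * k = 2 * π * Complex.I * (M * n) := by
          field_simp at hn
          linear_combination (2 * (π:ℂ) * Complex.I) * hn
        exact mul_left_cancel₀ h2 h3
      exact_mod_cast hkc
    rw [geom_sum_eq hζ1]
    have hζM : ζ ^ M = 1 := by
      rw [hζ, ← Complex.exp_nat_mul]
      rw [show (M : ℂ) * (2 * ↑π * Complex.I * ↑k / ↑M) = ↑k * (2 * ↑π * Complex.I) by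
        field_simp]
      exact Complex.exp_int_mul_two_pi_mul_I k
    rw [hζM]
    simp [hdvd]

/-- **Trapezoidal-rule error bound for analytic functions vanishing to order `N` at the
endpoints** (Lemma 5.1, estimate (5.3) of the paper): the `M`-node trapezoidal rule on
`[0, 2π]` with nodes `t_m = 2π(m−1)/M` has error `O(M^{−N−2})`. -/
theorem trapezoidal_rule_error_bound
    (N : ℕ) (g : ℝ → ℂ)
    (hg : ∃ U : Set ℝ, IsOpen U ∧ Set.Icc (0:ℝ) (2 * π) ⊆ U ∧ AnalyticOnNhd ℝ g U)
    (hg0 : ∀ n : ℕ, n ≤ N → iteratedDeriv n g 0 = 0)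
    (hg2π : ∀ n : ℕ, n ≤ N → iteratedDeriv n g (2 * π) = 0) :
    ∃ C : ℝ, 0 ≤ C ∧ ∀ M : ℕ, 1 ≤ M →
      ‖(∫ t in (0:ℝ)..(2 * π), g t) -
          (2 * π / M) * ∑ m ∈ Finset.range M, g (2 * π * m / M)‖
        ≤ C / (M : ℝ) ^ (N + 2) := by
  obtain ⟨U, hU, hUicc, hga⟩ := hg
  have hπ : (0:ℝ) < 2 * π := by positivity
  haveI : Fact (0 < 2 * π) := ⟨hπ⟩
  have hAn : ∀ n, AnalyticOnNhd ℝ (iteratedDeriv n g) U := by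
    intro n; induction n with
    | zero => simpa [iteratedDeriv_zero] using hga
    | succ n ih => rw [iteratedDeriv_succ]; exact ih.deriv_of_isOpen hU
  have hDer : ∀ n, ∀ x ∈ Set.Icc (0:ℝ) (2*π),
      HasDerivAt (iteratedDeriv n g) (iteratedDeriv (n+1) g x) x := by
    intro n x hx
    rw [iteratedDeriv_succ]
    exact ((hAn n x (hUicc hx)).differentiableAt).hasDerivAt
  have hCont : ∀ n, ContinuousOn (iteratedDeriv n g) (Set.Icc (0:ℝ) (2*π)) :=
    fun n => ((hAn n).continuousOn).mono hUicc
  have hIcc : Set.uIcc (0:ℝ) (2*π) = Set.Icc (0:ℝ) (2*π) := Set.uIcc_of_le (by positivity)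
  have hInt : ∀ n, IntervalIntegrable (iteratedDeriv n g) MeasureTheory.volume 0 (2*π) := by
    intro n
    apply ContinuousOn.intervalIntegrable
    rw [hIcc]; exact hCont n
  -- recurrence
  have hrec : ∀ n : ℕ, n ≤ N → ∀ k : ℤ, k ≠ 0 →
      fourierCoeffOn hπ (iteratedDeriv n g) k
        = (Complex.I * k)⁻¹ * fourierCoeffOn hπ (iteratedDeriv (n+1) g) k := by
    intro n hn k hk
    rw [fourierCoeffOn_of_hasDerivAt hπ hk
      (fun x hx => hDer n x (hIcc ▸ hx)) (hInt (n+1))]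
    rw [hg0 n hn, hg2π n hn]
    have hπC : (π : ℂ) ≠ 0 := Complex.ofReal_ne_zero.mpr Real.pi_ne_zero
    have hkC : (k : ℂ) ≠ 0 := Int.cast_ne_zero.mpr hk
    push_cast
    field_simp [Complex.I_ne_zero]
    ring
  have hfour : ∀ (k : ℤ) (x : AddCircle (2*π - 0)), ‖fourier k x‖ = 1 := by
    intro k x; simp [fourier_apply, Circle.norm_coe]
  obtain ⟨B2, hB2⟩ := (isCompact_Icc).exists_bound_of_continuousOn (hCont (N+2))
  have hB2' : (0:ℝ) ≤ B2 := le_trans (norm_nonneg _) (hB2 0 ⟨le_refl 0, by positivity⟩)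
  have hbase : ∀ k : ℤ, ‖fourierCoeffOn hπ (iteratedDeriv (N+2) g) k‖ ≤ B2 := by
    intro k
    rw [fourierCoeffOn_eq_integral]
    rw [norm_smul]
    have h1 : ‖∫ x in (0:ℝ)..(2*π), fourier (-k) (x : AddCircle (2*π - 0)) • iteratedDeriv (N+2) g x‖
        ≤ B2 * |2*π - 0| := by
      apply intervalIntegral.norm_integral_le_of_norm_le_const
      intro x hx
      have hx' : x ∈ Set.Icc (0:ℝ) (2*π) := by
        rw [Set.uIoc_of_le hπ.le] at hx
        exact ⟨hx.1.le, hx.2⟩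
      rw [norm_smul, hfour]
      simpa using hB2 x hx'
    calc ‖(1:ℝ)/(2*π-0)‖ * ‖∫ x in (0:ℝ)..(2*π), fourier (-k) (x : AddCircle (2*π-0)) • iteratedDeriv (N+2) g x‖
        ≤ ‖(1:ℝ)/(2*π-0)‖ * (B2 * |2*π - 0|) := by
          exact mul_le_mul_of_nonneg_left h1 (norm_nonneg _)
      _ = B2 := by
          rw [Real.norm_eq_abs, sub_zero]
          rw [abs_of_pos (by positivity), abs_of_pos (by positivity)]
          field_simp
  set Δ : ℂ := iteratedDeriv (N+1) g (2*π) - iteratedDeriv (N+1) g 0 with hΔ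
  set B1 : ℝ := ‖Δ‖ / (2*π) + B2 with hB1
  have hB1' : (0:ℝ) ≤ B1 := by positivity
  have hbound1 : ∀ k : ℤ, k ≠ 0 →
      ‖fourierCoeffOn hπ (iteratedDeriv (N+1) g) k‖ ≤ B1 / |(k:ℝ)| := by
    intro k hk
    have hk' : (0:ℝ) < |(k:ℝ)| := by
      simp only [abs_pos, Int.cast_ne_zero]; exact hk
    rw [fourierCoeffOn_of_hasDerivAt hπ hk (fun x hx => hDer (N+1) x (hIcc ▸ hx)) (hInt (N+2))]
    rw [norm_mul]
    have h1 : ‖(1:ℂ) / (-2 * ↑π * Complex.I * ↑k)‖ = 1 / (2*π*|(k:ℝ)|) := by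
      rw [norm_div, norm_one]
      congr 1
      simp [abs_of_pos Real.pi_pos]
    have h2 : ‖fourier (-k) ((0:ℝ) : AddCircle (2*π - 0)) *
          (iteratedDeriv (N+1) g (2*π) - iteratedDeriv (N+1) g 0)
        - (((2*π:ℝ) : ℂ) - ((0:ℝ) : ℂ)) * fourierCoeffOn hπ (iteratedDeriv (N+1+1) g) k‖
        ≤ ‖Δ‖ + 2*π*B2 := by
      refine le_trans (norm_sub_le _ _) ?_
      gcongr
      · rw [norm_mul, hfour]
        simp [hΔ]
      · rw [norm_mul]
        have h3 : ‖(((2*π:ℝ) : ℂ) - ((0:ℝ) : ℂ))‖ = 2*π := by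
          rw [← Complex.ofReal_sub, Complex.norm_real, Real.norm_eq_abs, sub_zero,
            abs_of_pos (by positivity)]
        rw [h3]
        exact mul_le_mul_of_nonneg_left (hbase k) (by positivity)
    calc ‖(1:ℂ) / (-2 * ↑π * Complex.I * ↑k)‖ * _ ≤ (1/(2*π*|(k:ℝ)|)) * (‖Δ‖ + 2*π*B2) := by
          rw [h1]; exact mul_le_mul_of_nonneg_left h2 (by positivity)
      _ = B1 / |(k:ℝ)| := by rw [hB1]; field_simp
  have hIknorm : ∀ k : ℤ, ‖(Complex.I * (k:ℂ))⁻¹‖ = 1 / |(k:ℝ)| := by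
    intro k
    rw [norm_inv, norm_mul, Complex.norm_I, one_mul, one_div]
    congr 1
    simp
  have hiter : ∀ n : ℕ, n ≤ N+1 → ∀ k : ℤ, k ≠ 0 →
      ‖fourierCoeffOn hπ g k‖ = ‖fourierCoeffOn hπ (iteratedDeriv n g) k‖ / |(k:ℝ)| ^ n := by
    intro n
    induction n with
    | zero => intro _ k _; simp [iteratedDeriv_zero]
    | succ n ih =>
      intro hn k hk
      have hk' : (0:ℝ) < |(k:ℝ)| := by
        simp only [abs_pos, Int.cast_ne_zero]; exact hk
      rw [ih (by omega) k hk, hrec n (by omega) k hk, norm_mul, hIknorm, pow_succ]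
      have haux : ∀ a b : ℝ, 0 < b → (1/b * a)/b^n = a/(b^n*b) := by
        intro a b hb; rw [one_div, inv_mul_eq_div, div_div, mul_comm]
      exact haux _ _ hk'
  have hbound : ∀ k : ℤ, k ≠ 0 → ‖fourierCoeffOn hπ g k‖ ≤ B1 / |(k:ℝ)| ^ (N+2) := by
    intro k hk
    have hk' : (0:ℝ) < |(k:ℝ)| := by
      simp only [abs_pos, Int.cast_ne_zero]; exact hk
    rw [hiter (N+1) le_rfl k hk]
    have := hbound1 k hk
    rw [div_le_div_iff₀ (by positivity) (by positivity)]
    calc ‖fourierCoeffOn hπ (iteratedDeriv (N+1) g) k‖ * |(k:ℝ)| ^ (N+2)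
        ≤ (B1 / |(k:ℝ)|) * |(k:ℝ)| ^ (N+2) := by
          exact mul_le_mul_of_nonneg_right this (by positivity)
      _ = B1 * |(k:ℝ)| ^ (N+1) := by
          field_simp
          ring
  -- the continuous periodic extension
  have hg00 : g 0 = 0 := by simpa using hg0 0 (Nat.zero_le N)
  have hg2π0 : g (2*π) = 0 := by simpa using hg2π 0 (Nat.zero_le N)
  have hContg : ContinuousOn g (Set.Icc (0:ℝ) (2*π)) := by
    simpa using hCont 0
  set F : C(AddCircle (2*π), ℂ) :=
    ⟨AddCircle.liftIco (2*π) 0 g,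
      AddCircle.liftIco_zero_continuous (by rw [hg00, hg2π0]) hContg⟩ with hF
  have hcoeff : ∀ k : ℤ, fourierCoeff (F : AddCircle (2*π) → ℂ) k = fourierCoeffOn hπ g k := by
    intro k
    exact (fourierCoeff_liftIco_eq (T := 2*π) (a := 0) g k).trans
      (fourierCoeffOn_congr' (zero_add _) _ _ g k)
  -- summability
  have hnat : ∀ (b : ℝ), Summable (fun k : ℤ => b / |(k:ℝ)| ^ (N+2)) := by
    intro b
    have h0 : Summable (fun n : ℕ => b * (1 / (n:ℝ) ^ (N+2))) :=
      (summable_one_div_nat_pow.mpr (by omega)).mul_left b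
    apply Summable.of_nat_of_neg
    · apply h0.congr
      intro n
      rw [mul_one_div]
      congr 1
      rw [Int.cast_natCast, abs_of_nonneg (Nat.cast_nonneg n)]
    · apply h0.congr
      intro n
      rw [mul_one_div]
      congr 1
      push_cast
      rw [abs_neg, abs_of_nonneg (Nat.cast_nonneg n)]
  have hFsum : Summable (fourierCoeff (F : AddCircle (2*π) → ℂ)) := by
    apply Summable.of_norm_bounded_eventually (hnat B1)
    rw [Filter.eventually_cofinite]
    apply Set.Finite.subset (Set.finite_singleton 0)
    intro k hk
    simp only [Set.mem_setOf_eq] at hk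
    by_contra hk0
    rw [Set.mem_singleton_iff] at hk0
    exact hk (by rw [hcoeff k]; exact hbound k hk0)
  have hHS : ∀ x : AddCircle (2*π),
      HasSum (fun k : ℤ => fourierCoeff (F : AddCircle (2*π) → ℂ) k • fourier k x) (F x) :=
    fun x => has_pointwise_sum_fourier_series_of_summable hFsum x
  -- the integral is 2π times the zeroth coefficient
  have hc0 : (∫ t in (0:ℝ)..(2*π), g t) = ((2*π : ℝ) : ℂ) * fourierCoeffOn hπ g 0 := by
    rw [fourierCoeffOn_eq_integral]
    simp only [neg_zero, fourier_zero, one_smul, sub_zero]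
    rw [Complex.real_smul, ← mul_assoc, ← Complex.ofReal_mul, mul_one_div,
      div_self (by positivity : (0:ℝ) < 2*π).ne', Complex.ofReal_one, one_mul]
  -- the majorant series and the constant
  set D : ℤ → ℝ := fun j => if j = 0 then 0 else 2*π*B1 / |(j:ℝ)| ^ (N+2) with hD
  have hDsum : Summable D := by
    apply (hnat (2*π*B1)).of_norm_bounded
    intro j
    simp only [hD]
    by_cases hj : j = 0
    · simp [hj]
    · rw [if_neg hj, Real.norm_eq_abs, abs_of_nonneg (by positivity)]
  have hDnonneg : ∀ j, 0 ≤ D j := by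
    intro j
    simp only [hD]
    by_cases hj : j = 0
    · simp [hj]
    · rw [if_neg hj]; positivity
  refine ⟨∑' j, D j, tsum_nonneg hDnonneg, ?_⟩
  intro M hM
  have hMR : (0:ℝ) < M := by exact_mod_cast hM
  have hMC : (M:ℂ) ≠ 0 := Nat.cast_ne_zero.mpr (by omega)
  -- value of F at the nodes
  have hFnode : ∀ m ∈ Finset.range M,
      F (((2*π*m/M : ℝ)) : AddCircle (2*π)) = g (2*π*m/M) := by
    intro m hm
    rw [Finset.mem_range] at hm
    apply AddCircle.liftIco_coe_apply
    rw [zero_add]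
    constructor
    · positivity
    · rw [div_lt_iff₀ hMR]
      have : (m:ℝ) < M := by exact_mod_cast hm
      nlinarith [Real.pi_pos]
  -- the trapezoidal sum as a sum of Fourier series values
  set S : ℂ := ∑ m ∈ Finset.range M, g (2*π*m/M) with hS
  have hS1 : HasSum (fun k : ℤ => ∑ m ∈ Finset.range M,
      fourierCoeff (F : AddCircle (2*π) → ℂ) k • fourier k (((2*π*m/M : ℝ)) : AddCircle (2*π))) S := by
    rw [hS]
    have := hasSum_sum (f := fun (m : ℕ) (k : ℤ) =>
        fourierCoeff (F : AddCircle (2*π) → ℂ) k • fourier k (((2*π*m/M : ℝ)) : AddCircle (2*π)))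
      (a := fun m => F (((2*π*m/M : ℝ)) : AddCircle (2*π))) (s := Finset.range M)
      (fun m _ => hHS _)
    rw [Finset.sum_congr rfl hFnode] at this
    exact this
  have hS2 : HasSum (fun k : ℤ =>
      if (M:ℤ) ∣ k then (M:ℂ) * fourierCoeffOn hπ g k else 0) S := by
    apply hS1.congr_fun
    intro k
    simp_rw [smul_eq_mul]
    rw [← Finset.mul_sum, sum_fourier_nodes hM k, hcoeff k]
    by_cases hd : (M:ℤ) ∣ k
    · rw [if_pos hd, if_pos hd, mul_comm]
    · rw [if_neg hd, if_neg hd, mul_zero]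
  -- reindex over multiples of M
  have hinj : Function.Injective (fun j : ℤ => (M:ℤ) * j) := by
    intro a b h
    have hM0 : (M:ℤ) ≠ 0 := by exact_mod_cast (by omega : M ≠ 0)
    exact mul_left_cancel₀ hM0 h
  have hvanish : ∀ k : ℤ, k ∉ Set.range (fun j : ℤ => (M:ℤ) * j) →
      (if (M:ℤ) ∣ k then (M:ℂ) * fourierCoeffOn hπ g k else 0) = 0 := by
    intro k hk
    rw [if_neg]
    rintro ⟨j, hj⟩
    exact hk ⟨j, hj.symm⟩
  have hS3 : HasSum (fun j : ℤ => (M:ℂ) * fourierCoeffOn hπ g ((M:ℤ)*j)) S := by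
    have h := (hinj.hasSum_iff hvanish).mpr hS2
    apply h.congr_fun
    intro j
    simp only [Function.comp]
    rw [if_pos ⟨j, rfl⟩]
  have hS5 : HasSum (fun j : ℤ => 2*(π:ℂ) * fourierCoeffOn hπ g ((M:ℤ)*j))
      ((2*(π:ℂ)/M) * S) := by
    apply (hS3.mul_left (2*(π:ℂ)/M)).congr_fun
    intro j
    field_simp
  have hS6 : HasSum (fun j : ℤ => if j = 0 then (2*(π:ℂ) * fourierCoeffOn hπ g 0) else 0)
      (2*(π:ℂ) * fourierCoeffOn hπ g 0) := hasSum_ite_eq 0 _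
  set ψ : ℤ → ℂ := fun j => if j = 0 then 0 else 2*(π:ℂ) * fourierCoeffOn hπ g ((M:ℤ)*j) with hψ
  have hS7 : HasSum ψ ((2*(π:ℂ)/M) * S - 2*(π:ℂ) * fourierCoeffOn hπ g 0) := by
    apply (hS5.sub hS6).congr_fun
    intro j
    by_cases hj : j = 0
    · simp [hψ, hj]
    · simp [hψ, hj]
  have hgoal : (∫ t in (0:ℝ)..(2*π), g t) - (2*(π:ℂ)/M) * S
      = -((2*(π:ℂ)/M) * S - 2*(π:ℂ) * fourierCoeffOn hπ g 0) := by
    rw [hc0]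
    push_cast
    ring
  have hψn : ∀ j : ℤ, ‖ψ j‖ ≤ D j / (M:ℝ)^(N+2) := by
    intro j
    by_cases hj : j = 0
    · simp [hψ, hj, hD]
    · simp only [hψ, if_neg hj]
      rw [norm_mul]
      have hMj : (M:ℤ)*j ≠ 0 := mul_ne_zero (by exact_mod_cast (by omega : M ≠ 0)) hj
      have h1 : ‖(2*(π:ℂ))‖ = 2*π := by
        rw [show (2*(π:ℂ)) = ((2*π:ℝ):ℂ) by push_cast; ring, Complex.norm_real,
          Real.norm_eq_abs, abs_of_pos hπ]
      rw [h1]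
      have h2 := hbound ((M:ℤ)*j) hMj
      have hjR : (0:ℝ) < |(j:ℝ)| := by
        simp only [abs_pos, Int.cast_ne_zero]; exact hj
      have h3 : |(((M:ℤ)*j : ℤ):ℝ)| = (M:ℝ) * |(j:ℝ)| := by
        push_cast
        rw [abs_mul, abs_of_nonneg (by positivity : (0:ℝ) ≤ (M:ℝ))]
      calc 2*π*‖fourierCoeffOn hπ g ((M:ℤ)*j)‖
          ≤ 2*π*(B1 / |(((M:ℤ)*j : ℤ):ℝ)|^(N+2)) :=
            mul_le_mul_of_nonneg_left h2 (by positivity)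
        _ = D j / (M:ℝ)^(N+2) := by
            rw [h3]
            simp only [hD, if_neg hj]
            rw [mul_pow]
            ring
  have hψns : Summable (fun j => ‖ψ j‖) :=
    Summable.of_nonneg_of_le (fun j => norm_nonneg _) hψn (hDsum.div_const _)
  calc ‖(∫ t in (0:ℝ)..(2*π), g t) - (2*(π:ℂ)/M) * S‖
      = ‖∑' j, ψ j‖ := by rw [hgoal, norm_neg, hS7.tsum_eq]
    _ ≤ ∑' j, ‖ψ j‖ := norm_tsum_le_tsum_norm hψns
    _ ≤ ∑' j, D j / (M:ℝ)^(N+2) := Summable.tsum_le_tsum hψn hψns (hDsum.div_const _)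
    _ = (∑' j, D j) / (M:ℝ)^(N+2) := tsum_div_const
end

section
/- Let γ : ℝ → ℂ be 2π-periodic, analytic on ℝ (i.e., real-analytic in a neighborhood of every point, with values in ℂ), injective on [0, 2π), and with deriv γ t ≠ 0 for all t. Then there exists a function h : ℝ → ℂ, analytic on an open neighborhood of [0, 2π], such that γ(t) − γ(0) = 2·sin(t/2)·h(t) for all t ∈ [0, 2π] and h(t) ≠ 0 for all t ∈ [0, 2π]. (The kernel-splitting fact underlying equation (5.6) in the proof of Theorem 5.2: γ(t) − γ(0) factors as 2·sin(t/2) times a nonvanishing analytic function, so that log(γ(t) − γ(0)) − (1/2)·log(4·sin²(t/2)) is analytic on [0, 2π].) -/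
open Real

/-- If `f : ℝ → ℂ` is analytic at `a` with `f a = 0` and `deriv f a ≠ 0`, then near `a` we can
write `f t = (t - a) • g t` with `g` analytic and nonvanishing at `a`. -/
lemma fact_one (f : ℝ → ℂ) (a : ℝ) (hf : AnalyticAt ℝ f a) (h0 : f a = 0)
    (hd : deriv f a ≠ 0) :
    ∃ g : ℝ → ℂ, AnalyticAt ℝ g a ∧ g a ≠ 0 ∧ ∀ᶠ t in nhds a, f t = (t - a) • g t := by
  have hne : ¬ ∀ᶠ t in nhds a, f t = 0 := by
    intro h
    apply hd
    have : f =ᶠ[nhds a] (fun _ => (0:ℂ)) := h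
    rw [this.deriv_eq]
    simp
  obtain ⟨n, g, hg, hgne, heq⟩ := hf.exists_eventuallyEq_pow_smul_nonzero_iff.mpr hne
  have hn1 : n = 1 := by
    rcases Nat.lt_or_ge n 1 with h1 | h1
    · interval_cases n
      exfalso
      apply hgne
      have := heq.self_of_nhds
      simpa [h0] using this.symm
    rcases Nat.lt_or_ge n 2 with h2 | h2
    · omega
    · exfalso
      apply hd
      have hgd : DifferentiableAt ℝ g a := hg.differentiableAt
      have hD : HasDerivAt (fun t : ℝ => (t - a) ^ n • g t)
          (((id a - a) ^ n) • deriv g a + ((n : ℝ) * (id a - a) ^ (n - 1) * 1) • g a) a :=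
        ((((hasDerivAt_id a).sub_const a).pow n)).smul hgd.hasDerivAt
      have : deriv f a = deriv (fun t : ℝ => (t - a) ^ n • g t) a :=
        Filter.EventuallyEq.deriv_eq heq
      rw [this, hD.deriv]
      have : (id a - a) = (0:ℝ) := by simp
      rw [this]
      rw [zero_pow (by omega), zero_pow (by omega)]
      simp
  subst hn1
  exact ⟨g, hg, hgne, by simpa using heq⟩


/-- **Kernel splitting for analytic contours** (the fact underlying equation (5.6) in the
proof of Theorem 5.2 of the paper): for a `2π`-periodic real-analytic regular injective
parametrization `γ`, the difference `γ(t) − γ(0)` factors as `2 sin(t/2)` times a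
nonvanishing function analytic near `[0, 2π]`. -/
theorem kernel_splitting_analytic
    (γ : ℝ → ℂ) (hper : Function.Periodic γ (2 * π))
    (hγ : ∀ t : ℝ, AnalyticAt ℝ γ t)
    (hinj : Set.InjOn γ (Set.Ico 0 (2 * π)))
    (hreg : ∀ t : ℝ, deriv γ t ≠ 0) :
    ∃ h : ℝ → ℂ,
      (∃ U : Set ℝ, IsOpen U ∧ Set.Icc (0:ℝ) (2 * π) ⊆ U ∧ AnalyticOnNhd ℝ h U) ∧
      (∀ t ∈ Set.Icc (0:ℝ) (2 * π),
        γ t - γ 0 = 2 * (Real.sin (t / 2) : ℂ) * h t ∧ h t ≠ 0) := by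
  have hπ : (0:ℝ) < π := Real.pi_pos
  set F : ℝ → ℂ := fun t => γ t - γ 0 with hFdef
  set S : ℝ → ℂ := fun t => 2 * Complex.sin ((t:ℂ)/2) with hSdef
  have hSeq : ∀ t : ℝ, S t = 2 * (Real.sin (t/2) : ℂ) := by
    intro t
    simp only [hSdef, Complex.ofReal_sin]
    push_cast
    ring_nf
  -- analyticity of F and S
  have hFan : ∀ t, AnalyticAt ℝ F t := fun t => (hγ t).sub analyticAt_const
  have hSanC : ∀ z : ℂ, AnalyticAt ℂ (fun z : ℂ => 2 * Complex.sin (z/2)) z := by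
    intro z
    exact ((Complex.differentiable_sin.comp (differentiable_id.div_const 2)).const_mul
      2).analyticAt z
  have hSan : ∀ t : ℝ, AnalyticAt ℝ S t := by
    intro t
    have := ((hSanC (t:ℂ)).restrictScalars (𝕜 := ℝ)).comp (Complex.ofRealCLM.analyticAt t)
    exact this
  -- derivatives of F and S
  have hFderiv : ∀ t, deriv F t = deriv γ t := by
    intro t
    simp only [hFdef]
    rw [deriv_sub_const]
  have hSderiv : ∀ t : ℝ, HasDerivAt S (Complex.cos ((t:ℂ)/2)) t := by
    intro t
    have hin : HasDerivAt (fun z : ℂ => z/2) (1/2) (t:ℂ) := (hasDerivAt_id _).div_const 2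
    have h1 : HasDerivAt (fun z : ℂ => 2 * Complex.sin (z/2))
        (2 * (Complex.cos ((t:ℂ)/2) * (1/2))) (t:ℂ) :=
      by have h := ((Complex.hasDerivAt_sin ((t:ℂ)/2)).comp ((t:ℂ)) hin).const_mul 2; exact h
    have h2 := h1.comp_ofReal
    convert h2 using 1
    ring
  -- F and S both vanish at 0 and 2π with nonzero derivative
  have hF0 : F 0 = 0 := by simp [hFdef]
  have hF2 : F (2*π) = 0 := by
    have := hper 0
    simp only [zero_add] at this
    simp [hFdef, this]
  have hS0 : S 0 = 0 := by simp [hSdef]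
  have hS2 : S (2*π) = 0 := by
    have : ((2*π : ℝ):ℂ)/2 = (π : ℂ) := by push_cast; ring
    simp [hSdef, this, Complex.sin_pi]
  have hSd0 : deriv S 0 ≠ 0 := by
    rw [(hSderiv 0).deriv]
    norm_num
  have hSd2 : deriv S (2*π) ≠ 0 := by
    rw [(hSderiv (2*π)).deriv]
    have : ((2*π : ℝ):ℂ)/2 = (π : ℂ) := by push_cast; ring
    rw [this, Complex.cos_pi]
    norm_num
  -- factorizations at 0 and 2π
  obtain ⟨g₀, hg₀, hg₀ne, heqF0⟩ := fact_one F 0 (hFan 0) hF0 (by rw [hFderiv]; exact hreg 0)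
  obtain ⟨g₂, hg₂, hg₂ne, heqF2⟩ :=
    fact_one F (2*π) (hFan (2*π)) hF2 (by rw [hFderiv]; exact hreg (2*π))
  obtain ⟨σ₀, hσ₀, hσ₀ne, heqS0⟩ := fact_one S 0 (hSan 0) hS0 hSd0
  obtain ⟨σ₂, hσ₂, hσ₂ne, heqS2⟩ := fact_one S (2*π) (hSan (2*π)) hS2 hSd2
  -- nonvanishing on the interior
  have hFne : ∀ t ∈ Set.Ioo (0:ℝ) (2*π), F t ≠ 0 := by
    intro t ht h
    have h1 : γ t = γ 0 := by
      have := sub_eq_zero.mp h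
      exact this
    have := hinj ⟨le_of_lt ht.1, ht.2⟩ ⟨le_refl 0, by positivity⟩ h1
    exact absurd this (ne_of_gt ht.1)
  have hSne : ∀ t ∈ Set.Ioo (0:ℝ) (2*π), S t ≠ 0 := by
    intro t ht
    rw [hSeq]
    have : Real.sin (t/2) ≠ 0 :=
      ne_of_gt (Real.sin_pos_of_pos_of_lt_pi (by linarith [ht.1]) (by linarith [ht.2]))
    exact mul_ne_zero two_ne_zero (Complex.ofReal_ne_zero.mpr this)
  -- define h
  set h : ℝ → ℂ := fun t =>
    if t = 0 then g₀ 0 / σ₀ 0 else if t = 2*π then g₂ (2*π) / σ₂ (2*π) else F t / S t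
    with hdef
  -- analyticity of h at 0
  have han0 : AnalyticAt ℝ h 0 := by
    apply (hg₀.div hσ₀ hσ₀ne).congr
    have hnz : ∀ᶠ t in nhds (0:ℝ), σ₀ t ≠ 0 := hσ₀.continuousAt.eventually_ne hσ₀ne
    have hIio : Set.Iio π ∈ nhds (0:ℝ) := Iio_mem_nhds hπ
    filter_upwards [heqF0, heqS0, hnz, hIio] with t hFt hSt hσt hlt
    by_cases ht0 : t = 0
    · simp [hdef, ht0]
    · have ht2 : t ≠ 2*π := by intro h; rw [h] at hlt; simp at hlt; linarith
      simp only [hdef, if_neg ht0, if_neg ht2]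
      rw [hFt, hSt]
      simp only [sub_zero, Complex.real_smul]
      rw [mul_div_mul_left _ _ (by exact_mod_cast ht0 : (t:ℂ) ≠ 0)]
      rfl
  -- analyticity of h at 2π
  have han2 : AnalyticAt ℝ h (2*π) := by
    apply (hg₂.div hσ₂ hσ₂ne).congr
    have hnz : ∀ᶠ t in nhds (2*π:ℝ), σ₂ t ≠ 0 := hσ₂.continuousAt.eventually_ne hσ₂ne
    have hIoi : Set.Ioi π ∈ nhds (2*π:ℝ) := Ioi_mem_nhds (by linarith)
    filter_upwards [heqF2, heqS2, hnz, hIoi] with t hFt hSt hσt hgt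
    by_cases ht2 : t = 2*π
    · have h0 : (2*π:ℝ) ≠ 0 := by positivity
      simp [hdef, ht2, h0]
    · have ht0 : t ≠ 0 := by intro h; rw [h] at hgt; simp at hgt; linarith
      simp only [hdef, if_neg ht0, if_neg ht2]
      rw [hFt, hSt]
      simp only [Complex.real_smul]
      have : ((t - 2*π : ℝ):ℂ) ≠ 0 := by
        exact_mod_cast sub_ne_zero.mpr ht2
      rw [mul_div_mul_left _ _ this]
      rfl
  -- analyticity of h at interior points
  have hanI : ∀ t ∈ Set.Ioo (0:ℝ) (2*π), AnalyticAt ℝ h t := by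
    intro t ht
    apply ((hFan t).div (hSan t) (hSne t ht)).congr
    have : Set.Ioo (0:ℝ) (2*π) ∈ nhds t := isOpen_Ioo.mem_nhds ht
    filter_upwards [this] with s hs
    have hs0 : s ≠ 0 := ne_of_gt hs.1
    have hs2 : s ≠ 2*π := ne_of_lt hs.2
    simp [hdef, hs0, hs2]
  refine ⟨h, ⟨{x | AnalyticAt ℝ h x}, isOpen_analyticAt ℝ h, ?_, fun x hx => hx⟩, ?_⟩
  · intro t ht
    rcases eq_or_lt_of_le ht.1 with h0 | h0
    · exact h0 ▸ han0
    rcases eq_or_lt_of_le ht.2 with h2 | h2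
    · exact h2 ▸ han2
    exact hanI t ⟨h0, h2⟩
  · intro t ht
    rcases eq_or_lt_of_le ht.1 with h0 | h0
    · subst h0
      constructor
      · simp [hFdef] at hF0 ⊢
      · simp only [hdef, if_pos rfl]
        exact div_ne_zero hg₀ne hσ₀ne
    rcases eq_or_lt_of_le ht.2 with h2 | h2
    · subst h2
      have h0 : (2*π:ℝ) ≠ 0 := by positivity
      constructor
      · have hγ2 : γ (2*π) = γ 0 := by have := hper 0; simpa using this
        rw [hγ2]
        have : Real.sin (2*π/2) = 0 := by
          rw [show (2*π/2 : ℝ) = π by ring, Real.sin_pi]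
        rw [this]
        simp
      · simp only [hdef, if_neg h0, if_pos rfl]
        exact div_ne_zero hg₂ne hσ₂ne
    · have ht' : t ∈ Set.Ioo (0:ℝ) (2*π) := ⟨h0, h2⟩
      have ht0 : t ≠ 0 := ne_of_gt h0
      have ht2 : t ≠ 2*π := ne_of_lt h2
      have hht : h t = F t / S t := by simp [hdef, ht0, ht2]
      constructor
      · rw [hht, ← hSeq]
        rw [mul_div_cancel₀ _ (hSne t ht')]
      · rw [hht]
        exact div_ne_zero (hFne t ht') (hSne t ht')
end
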